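/- Under assumptions A1 (the noises N₁,...,Nₙ are independent and each symmetrically distributed about zero) and A2 (Rₙ is invertible), the ellipsoidal outer approximation contains the true parameter with probability at least p: P(θ* ∈ Θ̂̂ₙ) ≥ 1 − q/m = p, where Θ̂̂ₙ := {θ ∈ ℝ^d : (θ − θ̂ₙ)ᵀRₙ(θ − θ̂ₙ) ≤ r} and r is the q-th largest value among γ₁*, ..., γ_{m−1}* with γ_i* := sup{‖S_i(θ)‖² : ‖S₀(θ)‖² ≤ ‖S_i(θ)‖²}. -/

import Mathlib

open MeasureTheory ProbabilityTheory Matrix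
open scoped ENNReal

noncomputable section

/-- Squared Euclidean norm of a vector in `ℝ^d`. -/
def spsNormSq {d : ℕ} (v : Fin d → ℝ) : ℝ := ∑ j, v j ^ 2

/-- A random sign: takes values `1` and `-1` with probability `1/2` each. -/
def IsRandomSign {Ω : Type*} [MeasurableSpace Ω] (μ : Measure Ω) (f : Ω → ℝ) : Prop :=
  μ {ω | f ω = 1} = 1 / 2 ∧ μ {ω | f ω = -1} = 1 / 2

/-- The (sign-perturbed) sums `S_i(θ)`. -/
def spsS {d n m : ℕ} (φ : Fin n → Fin d → ℝ) (Rhalf : Matrix (Fin d) (Fin d) ℝ)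
    (Y : Fin n → ℝ) (a : Fin m → Fin n → ℝ) (i : Fin m) (θ : Fin d → ℝ) : Fin d → ℝ :=
  Rhalf⁻¹ *ᵥ ((n : ℝ)⁻¹ • ∑ t, (a i t * (Y t - φ t ⬝ᵥ θ)) • φ t)

/-- `γ_i* = sup {‖S_i(θ)‖² : ‖S₀(θ)‖² ≤ ‖S_i(θ)‖²}`, in the extended reals. -/
def gammaStar {d n m : ℕ} [NeZero m] (φ : Fin n → Fin d → ℝ)
    (Rhalf : Matrix (Fin d) (Fin d) ℝ) (Y : Fin n → ℝ) (a : Fin m → Fin n → ℝ)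
    (i : Fin m) : EReal :=
  sSup ((fun θ : Fin d → ℝ => ((spsNormSq (spsS φ Rhalf Y a i θ) : ℝ) : EReal)) ''
    {θ : Fin d → ℝ | spsNormSq (spsS φ Rhalf Y a 0 θ) ≤ spsNormSq (spsS φ Rhalf Y a i θ)})

/-- The `q`-th largest element of a multiset of extended reals. -/
def qthLargestE (s : Multiset EReal) (q : ℕ) : EReal :=
  (s.sort (· ≤ ·)).getD (Multiset.card s - q) 0

instance {k : ℕ} : MeasurableSpace (Equiv.Perm (Fin k)) := ⊤

/-!
Put `Z_j := ‖S_j(θ*)‖²`. Since `Y_t - φ_tᵀθ* = N_t`, `Z_j` is a fixed function of the perturbed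
noise `(α_{j,t} N_t)_t`, and `Z_0 = (θ* - θ̂ₙ)ᵀ Rₙ (θ* - θ̂ₙ)`. For `i ≠ 0`, multiplying all sign
rows and the noise by the `i`-th sign row and exchanging the rows `0` and `i` preserves the joint
law of signs and noise (uniform signs, symmetric noise) and turns `Z_j` into `Z_{swap 0 i j}`.
Hence the events "at least `m - q` of the `Z_j` lie strictly below `Z_i`" all have the same
probability; since at most `q` of them occur at once, each has probability at most `q / m`.
Outside the event for `i = 0`, at least `q` indices `j ≠ 0` satisfy `Z_0 ≤ Z_j`, so `θ*` is
admissible in `γ_j*`, giving `Z_0 ≤ Z_j ≤ γ_j*` for `q` of them, i.e. `Z_0 ≤ r`.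
-/

section OrderStatistics

open Finset

lemma card_filter_many_lt_le {ι : Type*} [Fintype ι] (z : ι → ℝ) (k : ℕ) :
    #{i | k ≤ #{j | z j < z i}} ≤ Fintype.card ι - k := by
  obtain h | hne := eq_empty_or_nonempty ({i | k ≤ #{j | z j < z i}} : Finset ι)
  · simp [h]
  -- every such `i` lies above the smallest one, `i₀`, which has at least `k` indices below it
  obtain ⟨i₀, hi₀, hmin⟩ := exists_min_image _ z hne
  have hsub : ({i | k ≤ #{j | z j < z i}} : Finset ι) ⊆ ({j | ¬z j < z i₀} : Finset ι) :=
    fun i hi => by simpa using hmin i hi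
  have hsplit := card_filter_add_card_filter_not (s := univ) (fun j => z j < z i₀)
  have hcard := card_le_card hsub
  simp only [mem_filter, mem_univ, true_and] at hi₀
  simp only [card_univ] at *
  omega

lemma le_qthLargestE {s : Multiset EReal} {q : ℕ} {c : EReal} (hq : 0 < q)
    (hc : q ≤ Multiset.card (s.filter (c ≤ ·))) : c ≤ qthLargestE s q := by
  set l := s.sort (· ≤ ·)
  have hlen : l.length = Multiset.card s := s.length_sort _
  have hqs : q ≤ Multiset.card s := hc.trans (Multiset.card_le_card (Multiset.filter_le _ _))
  have hk : Multiset.card s - q < l.length := by omega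
  rw [qthLargestE, List.getD_eq_getElem _ _ hk]
  by_contra! hlt
  -- by sortedness the first `card s - q + 1` entries are `< c`, leaving at most `q - 1` others
  have htake : (l.take (Multiset.card s - q + 1)).countP (c ≤ ·) = 0 := by
    refine List.countP_eq_zero.mpr fun x hx hcx => ?_
    obtain ⟨j, hj, rfl⟩ := List.mem_take_iff_getElem.mp hx
    have hsorted := (s.pairwise_sort (· ≤ ·)).rel_get_of_le
      (a := ⟨j, hj.trans_le (min_le_right _ _)⟩) (b := ⟨_, hk⟩) (Fin.mk_le_mk.mpr (by omega))
    exact absurd ((decide_eq_true_iff.mp hcx).trans hsorted) (not_le.mpr hlt)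
  have hcount : Multiset.card (s.filter (c ≤ ·)) = l.countP (c ≤ ·) := by
    conv_lhs => rw [← s.sort_eq (· ≤ ·)]
    rw [Multiset.filter_coe, Multiset.coe_card, List.countP_eq_length_filter]
  have hdrop := List.countP_le_length (p := (c ≤ ·)) (l := l.drop (Multiset.card s - q + 1))
  rw [← List.take_append_drop (Multiset.card s - q + 1) l, List.countP_append, htake] at hcount
  rw [List.length_drop] at hdrop
  omega

end OrderStatistics

lemma measurable_comp_right {ι κ α : Type*} [MeasurableSpace α] (f : κ → ι) :
    Measurable fun z : ι → α => z ∘ f :=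
  measurable_pi_lambda _ fun j => measurable_pi_apply (f j)

section RankEvent

open Finset

variable {ι : Type*} [Fintype ι]

def rankEvent (k : ℕ) (i : ι) : Set (ι → ℝ) := {z | k ≤ #{j | z j < z i}}

lemma measurableSet_rankEvent (k : ℕ) (i : ι) : MeasurableSet (rankEvent k i) := by
  have hcard : Measurable fun z : ι → ℝ => #{j | z j < z i} := by
    simp_rw [card_filter]
    exact Finset.measurable_sum _ fun j _ => Measurable.ite
      (measurableSet_lt (measurable_pi_apply j) (measurable_pi_apply i))
      measurable_const measurable_const
  exact hcard measurableSet_Ici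

lemma preimage_comp_perm_rankEvent (σ : Equiv.Perm ι) (k : ℕ) (i : ι) :
    (fun z : ι → ℝ => z ∘ σ) ⁻¹' rankEvent k i = rankEvent k (σ i) := by
  ext z
  simp only [rankEvent, Set.mem_preimage, Set.mem_ofPred_eq, Function.comp_apply]
  rw [card_equiv σ (t := {j | z j < z (σ i)}) fun j => by simp]

lemma measure_rankEvent_perm {ρ : Measure (ι → ℝ)} {σ : Equiv.Perm ι}
    (hρ : ρ.map (· ∘ σ) = ρ) (k : ℕ) (i : ι) :
    ρ (rankEvent k (σ i)) = ρ (rankEvent k i) := by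
  conv_rhs => rw [← hρ]
  rw [Measure.map_apply (measurable_comp_right _) (measurableSet_rankEvent k i),
    preimage_comp_perm_rankEvent]

lemma card_mul_measure_rankEvent_le [DecidableEq ι] (ρ : Measure (ι → ℝ)) (k : ℕ) (i₀ : ι)
    (hρ : ∀ i, ρ.map (· ∘ Equiv.swap i₀ i) = ρ) :
    Fintype.card ι * ρ (rankEvent k i₀) ≤ (Fintype.card ι - k : ℕ) * ρ Set.univ := by
  classical
  have h i : ρ (rankEvent k i) = ρ (rankEvent k i₀) := by
    simpa using measure_rankEvent_perm (hρ i) k i₀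
  calc Fintype.card ι * ρ (rankEvent k i₀) = ∑ i, ρ (rankEvent k i) := by simp [h]
    _ = ∫⁻ z, ∑ i, (rankEvent k i).indicator 1 z ∂ρ := by
      rw [lintegral_finsetSum _ fun i _ => measurable_one.indicator (measurableSet_rankEvent k i)]
      simp [measurableSet_rankEvent]
    _ ≤ ∫⁻ _, ((Fintype.card ι - k : ℕ) : ℝ≥0∞) ∂ρ := lintegral_mono fun z => ?_
    _ = _ := lintegral_const _
  simp only [Set.indicator_apply, Pi.one_apply, sum_boole]
  exact_mod_cast (card_filter_many_lt_le z k).trans_eq' (by congr)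

lemma le_card_filter_ne_of_notMem_rankEvent [DecidableEq ι] {z : ι → ℝ} {q : ℕ} {i₀ : ι}
    (hz : z ∉ rankEvent (Fintype.card ι - q) i₀) : q ≤ #{j | j ≠ i₀ ∧ z i₀ ≤ z j} := by
  have hsplit := card_filter_add_card_filter_not (s := univ) (fun j => z j < z i₀)
  have hne : #{j | ¬z j < z i₀} = #{j | j ≠ i₀ ∧ z i₀ ≤ z j} + 1 := by
    rw [← card_insert_of_notMem (a := i₀) (s := {j | j ≠ i₀ ∧ z i₀ ≤ z j}) (by simp)]
    congr 1
    ext j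
    by_cases hj : j = i₀ <;> simp [hj]
  simp only [rankEvent, Set.mem_ofPred_eq, not_le, card_univ] at hz hsplit
  omega

end RankEvent

lemma map_eq_self_of_leftInvOn_of_ae_mem_finite {X : Type*} [MeasurableSpace X]
    [MeasurableSingletonClass X] {ρ : Measure X} {S : Set X} (hS : S.Finite)
    (hρS : ∀ᵐ x ∂ρ, x ∈ S) {T : X → X} (hT : Measurable T) (hTS : Set.MapsTo T S S)
    (hTT : Set.LeftInvOn T T S) (hρT : ∀ x ∈ S, ρ {T x} = ρ {x}) : ρ.map T = ρ := by
  classical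
  have hρS' : ρ Sᶜ = 0 := ae_iff.mp hρS
  ext A hA
  set F := hS.toFinset.filter (· ∈ A)
  have hFS : ∀ x ∈ F, x ∈ S := fun x hx => hS.mem_toFinset.1 (Finset.mem_filter.1 hx).1
  have hF : A ∩ S = F := by ext x; simp [F, and_comm]
  have hTF : T ⁻¹' A ∩ S = (F.image T : Set X) := by
    ext x
    simp only [Set.mem_inter_iff, Set.mem_preimage, Finset.coe_image, Set.mem_image,
      Finset.mem_coe, Finset.mem_filter, Set.Finite.mem_toFinset, F]
    constructor
    · rintro ⟨hxA, hxS⟩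
      exact ⟨T x, ⟨hTS hxS, hxA⟩, hTT hxS⟩
    · rintro ⟨y, ⟨hyS, hyA⟩, rfl⟩
      exact ⟨by rwa [hTT hyS], hTS hyS⟩
  rw [Measure.map_apply hT hA, ← measure_inter_conull hρS', hTF, ← sum_measure_singleton,
    Finset.sum_image fun x hx y hy => hTT.injOn (hFS x hx) (hFS y hy),
    ← measure_inter_conull (s := A) hρS', hF, ← sum_measure_singleton]
  exact Finset.sum_congr rfl fun x hx => hρT x (hFS x hx)

lemma measurePreserving_pi_mul_signs {ι : Type*} [Fintype ι] {ν : ι → Measure ℝ}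
    [∀ t, SigmaFinite (ν t)] (hν : ∀ t, (ν t).map Neg.neg = ν t) {ε : ι → ℝ}
    (hε : ∀ t, ε t = 1 ∨ ε t = -1) :
    MeasurePreserving (fun x t => ε t * x t) (Measure.pi ν) (Measure.pi ν) :=
  measurePreserving_pi ν ν fun t => by
    rcases hε t with h | h
    · convert MeasurePreserving.id (ν t) using 1
      funext x
      simp [h]
    · convert (⟨measurable_neg, hν t⟩ : MeasurePreserving Neg.neg (ν t) (ν t)) using 1
      funext x
      simp [h]

lemma IsRandomSign.ae_eq_one_or_eq_neg_one {Ω : Type*} [MeasurableSpace Ω] {μ : Measure Ω}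
    [IsProbabilityMeasure μ] {f : Ω → ℝ} (hf : Measurable f) (h : IsRandomSign μ f) :
    ∀ᵐ ω ∂μ, f ω = 1 ∨ f ω = -1 := by
  have hdisj : Disjoint {ω | f ω = 1} {ω | f ω = -1} :=
    Set.disjoint_left.2 fun ω (h1 : f ω = 1) (h2 : f ω = -1) => by norm_num [h1] at h2
  have hunion : μ ({ω | f ω = 1} ∪ {ω | f ω = -1}) = 1 := by
    rw [measure_union hdisj (hf (measurableSet_singleton _)), h.1, h.2, ENNReal.add_halves]
  exact mem_ae_iff.2 ((prob_compl_eq_zero_iff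
    ((hf (measurableSet_singleton _)).union (hf (measurableSet_singleton _)))).2 hunion)

lemma IsRandomSign.map_singleton_one {Ω : Type*} [MeasurableSpace Ω] {μ : Measure Ω}
    {f : Ω → ℝ} (hf : Measurable f) (h : IsRandomSign μ f) : μ.map f {1} = μ.map f {-1} := by
  rw [Measure.map_apply hf (measurableSet_singleton _),
    Measure.map_apply hf (measurableSet_singleton _)]
  exact h.1.trans h.2.symm

section SignVectors

variable {m n : ℕ} [NeZero m]

def signVectors (m n : ℕ) [NeZero m] : Set (Fin m × Fin n → ℝ) :=
  {a | (∀ t, a (0, t) = 1) ∧ ∀ p, a p = 1 ∨ a p = -1}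

lemma finite_signVectors : (signVectors m n).Finite :=
  (Set.Finite.pi' fun _ => ({1, -1} : Set ℝ).toFinite).subset fun _ ha => ha.2

lemma mul_self_eq_one_of_mem_signVectors {a : Fin m × Fin n → ℝ} (ha : a ∈ signVectors m n)
    (p : Fin m × Fin n) : a p * a p = 1 := by
  rcases ha.2 p with h | h <;> simp [h]

lemma ae_mem_signVectors {c : Fin m × Fin n → Measure ℝ} [∀ p, SigmaFinite (c p)]
    (hc0 : ∀ t, ∀ᵐ x ∂c (0, t), x = 1) (hc : ∀ p, ∀ᵐ x ∂c p, x = 1 ∨ x = -1) :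
    ∀ᵐ a ∂Measure.pi c, a ∈ signVectors m n :=
  (Filter.eventually_all.2 fun t => Measure.tendsto_eval_ae_ae.eventually (hc0 t)).and
    (Filter.eventually_all.2 fun p => Measure.tendsto_eval_ae_ae.eventually (hc p))

def signSwap (i : Fin m) (a : Fin m × Fin n → ℝ) : Fin m × Fin n → ℝ :=
  fun p => a (Equiv.swap 0 i p.1, p.2) * a (i, p.2)

lemma measurable_signSwap (i : Fin m) : Measurable (signSwap (n := n) i) :=
  measurable_pi_lambda _ fun _ => (measurable_pi_apply _).mul (measurable_pi_apply _)

lemma mapsTo_signSwap (i : Fin m) :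
    Set.MapsTo (signSwap i) (signVectors m n) (signVectors m n) := fun a ha =>
  ⟨fun t => by simpa [signSwap] using mul_self_eq_one_of_mem_signVectors ha (i, t), fun p => by
    rcases ha.2 (Equiv.swap 0 i p.1, p.2) with h | h <;> rcases ha.2 (i, p.2) with h' | h' <;>
      simp [signSwap, h, h']⟩

lemma leftInvOn_signSwap (i : Fin m) :
    Set.LeftInvOn (signSwap i) (signSwap i) (signVectors m n) := fun a ha => by
  funext ⟨j, t⟩
  have h0 := ha.1 t
  have hi := mul_self_eq_one_of_mem_signVectors ha (i, t)
  simp only [signSwap, Equiv.swap_apply_self, Equiv.swap_apply_right]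
  rw [h0]
  linear_combination a (j, t) * hi

lemma measurePreserving_signSwap {c : Fin m × Fin n → Measure ℝ} [∀ p, SigmaFinite (c p)]
    (hc0 : ∀ t, ∀ᵐ x ∂c (0, t), x = 1) (hc : ∀ p, ∀ᵐ x ∂c p, x = 1 ∨ x = -1)
    (hsymm : ∀ p, p.1 ≠ 0 → c p {1} = c p {-1}) (i : Fin m) :
    MeasurePreserving (signSwap i) (Measure.pi c) (Measure.pi c) := by
  refine ⟨measurable_signSwap i, map_eq_self_of_leftInvOn_of_ae_mem_finite finite_signVectors
    (ae_mem_signVectors hc0 hc) (measurable_signSwap i) (mapsTo_signSwap i)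
    (leftInvOn_signSwap i) fun a ha => ?_⟩
  rw [Measure.pi_singleton, Measure.pi_singleton]
  refine Finset.prod_congr rfl fun p _ => ?_
  have hTa := mapsTo_signSwap i ha
  by_cases hp : p.1 = 0
  · obtain ⟨j, t⟩ := p
    simp only at hp
    subst hp
    rw [hTa.1 t, ha.1 t]
  · rcases hTa.2 p with h | h <;> rcases ha.2 p with h' | h' <;> simp [h, h', hsymm p hp]

end SignVectors

section Exchangeability

variable {m n : ℕ}

def signedStats (F : (Fin n → ℝ) → ℝ) (e : (Fin m × Fin n → ℝ) × (Fin n → ℝ)) : Fin m → ℝ :=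
  fun j => F fun t => e.1 (j, t) * e.2 t

lemma measurable_signedStats {F : (Fin n → ℝ) → ℝ} (hF : Measurable F) :
    Measurable (signedStats (m := m) F) :=
  measurable_pi_lambda _ fun j => hF.comp <| measurable_pi_lambda _ fun t =>
    ((measurable_pi_apply (j, t)).comp measurable_fst).mul
      ((measurable_pi_apply t).comp measurable_snd)

lemma signedStats_signSwap [NeZero m] (F : (Fin n → ℝ) → ℝ) {a : Fin m × Fin n → ℝ}
    (ha : a ∈ signVectors m n) (x : Fin n → ℝ) (i : Fin m) :
    signedStats F (signSwap i a, fun t => a (i, t) * x t)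
      = signedStats F (a, x) ∘ Equiv.swap 0 i := by
  funext j
  simp only [signedStats, signSwap, Function.comp_apply]
  congr 1
  funext t
  linear_combination a (Equiv.swap 0 i j, t) * x t * mul_self_eq_one_of_mem_signVectors ha (i, t)

lemma map_signedStats_comp_swap [NeZero m] {c : Fin m × Fin n → Measure ℝ}
    [∀ p, SigmaFinite (c p)] {ν : Fin n → Measure ℝ} [∀ t, SigmaFinite (ν t)]
    (hc0 : ∀ t, ∀ᵐ x ∂c (0, t), x = 1) (hc : ∀ p, ∀ᵐ x ∂c p, x = 1 ∨ x = -1)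
    (hsymm : ∀ p, p.1 ≠ 0 → c p {1} = c p {-1}) (hν : ∀ t, (ν t).map Neg.neg = ν t)
    {F : (Fin n → ℝ) → ℝ} (hF : Measurable F) (i : Fin m) :
    (((Measure.pi c).prod (Measure.pi ν)).map (signedStats F)).map (· ∘ Equiv.swap 0 i)
      = ((Measure.pi c).prod (Measure.pi ν)).map (signedStats F) := by
  set Ψ : (Fin m × Fin n → ℝ) × (Fin n → ℝ) → (Fin m × Fin n → ℝ) × (Fin n → ℝ) :=
    fun e => (signSwap i e.1, fun t => e.1 (i, t) * e.2 t)
  have hΨ : MeasurePreserving Ψ ((Measure.pi c).prod (Measure.pi ν))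
      ((Measure.pi c).prod (Measure.pi ν)) :=
    (measurePreserving_signSwap hc0 hc hsymm i).skew_product
      (measurable_pi_lambda _ fun t => ((measurable_pi_apply (i, t)).comp measurable_fst).mul
        ((measurable_pi_apply t).comp measurable_snd))
      (by filter_upwards [ae_mem_signVectors hc0 hc] with a ha using
        (measurePreserving_pi_mul_signs hν fun t => ha.2 (i, t)).map_eq)
  have hstats : (· ∘ Equiv.swap 0 i) ∘ signedStats F
      =ᵐ[(Measure.pi c).prod (Measure.pi ν)] signedStats F ∘ Ψ := by
    filter_upwards [Measure.quasiMeasurePreserving_fst.ae (ae_mem_signVectors hc0 hc)] with e he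
    exact (signedStats_signSwap F he e.2 i).symm
  rw [Measure.map_map (measurable_comp_right _) (measurable_signedStats hF),
    Measure.map_congr hstats,
    ← Measure.map_map (measurable_signedStats hF) hΨ.measurable, hΨ.map_eq]

end Exchangeability

lemma map_prodMk_eq_prod_pi {Ω ι κ β γ : Type*} [MeasurableSpace Ω] [MeasurableSpace β]
    [MeasurableSpace γ] [Fintype ι] [Fintype κ] {μ : Measure Ω} [IsFiniteMeasure μ]
    {X : ι → Ω → β} {Y : κ → Ω → γ} (hX : ∀ i, Measurable (X i)) (hY : ∀ j, Measurable (Y j))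
    (hXi : iIndepFun X μ) (hYi : iIndepFun Y μ)
    (hXY : IndepFun (fun ω i => X i ω) (fun ω j => Y j ω) μ) :
    μ.map (fun ω => (fun i => X i ω, fun j => Y j ω))
      = (Measure.pi fun i => μ.map (X i)).prod (Measure.pi fun j => μ.map (Y j)) := by
  rw [(indepFun_iff_map_prod_eq_prod_map_map (measurable_pi_lambda _ hX).aemeasurable
      (measurable_pi_lambda _ hY).aemeasurable).1 hXY,
    hXi.map_fun_eq_pi_map fun i => (hX i).aemeasurable,
    hYi.map_fun_eq_pi_map fun j => (hY j).aemeasurable]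

lemma map_signedStats_comp_swap_of_iIndepFun {Ω : Type*} [MeasurableSpace Ω] {μ : Measure Ω}
    [IsProbabilityMeasure μ] {m n : ℕ} [NeZero m] {α : Fin m → Fin n → Ω → ℝ}
    {N : Fin n → Ω → ℝ} (hαmeas : ∀ i t, Measurable (α i t)) (hNmeas : ∀ t, Measurable (N t))
    (hα0 : ∀ t ω, α 0 t ω = 1) (hαsign : ∀ i : Fin m, i ≠ 0 → ∀ t, IsRandomSign μ (α i t))
    (hNsymm : ∀ t, μ.map (N t) = μ.map (fun ω => -(N t ω)))
    (hαindep : iIndepFun (fun p : Fin m × Fin n => α p.1 p.2) μ) (hNindep : iIndepFun N μ)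
    (hαN : IndepFun (fun ω (p : Fin m × Fin n) => α p.1 p.2 ω) (fun ω t => N t ω) μ)
    {F : (Fin n → ℝ) → ℝ} (hF : Measurable F) (i : Fin m) :
    (μ.map fun ω => signedStats F (fun p => α p.1 p.2 ω, fun t => N t ω)).map
        (· ∘ Equiv.swap 0 i)
      = μ.map fun ω => signedStats F (fun p => α p.1 p.2 ω, fun t => N t ω) := by
  have hc0 t : ∀ᵐ x ∂μ.map (α 0 t), x = 1 :=
    (ae_map_iff (hαmeas 0 t).aemeasurable (measurableSet_singleton 1)).2
      (ae_of_all _ (hα0 t))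
  have hc (p : Fin m × Fin n) : ∀ᵐ x ∂μ.map (α p.1 p.2), x = 1 ∨ x = -1 := by
    refine (ae_map_iff (hαmeas _ _).aemeasurable
      ((measurableSet_singleton 1).union (measurableSet_singleton (-1)))).2 ?_
    by_cases hp : p.1 = 0
    · exact ae_of_all _ fun ω => Or.inl (by rw [hp]; exact hα0 p.2 ω)
    · exact (hαsign p.1 hp p.2).ae_eq_one_or_eq_neg_one (hαmeas _ _)
  have hν t : (μ.map (N t)).map Neg.neg = μ.map (N t) := by
    rw [Measure.map_map measurable_neg (hNmeas t)]
    exact (hNsymm t).symm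
  have hE : Measurable fun ω => (fun p : Fin m × Fin n => α p.1 p.2 ω, fun t => N t ω) :=
    (measurable_pi_lambda _ fun p : Fin m × Fin n => hαmeas p.1 p.2).prodMk
      (measurable_pi_lambda _ hNmeas)
  have hlaw : (μ.map fun ω => signedStats F (fun p => α p.1 p.2 ω, fun t => N t ω))
      = ((Measure.pi fun p : Fin m × Fin n => μ.map (α p.1 p.2)).prod
          (Measure.pi fun t => μ.map (N t))).map (signedStats F) := by
    rw [← map_prodMk_eq_prod_pi (X := fun p : Fin m × Fin n => α p.1 p.2)
        (fun p => hαmeas p.1 p.2) hNmeas hαindep hNindep hαN,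
      Measure.map_map (measurable_signedStats hF) hE]
    rfl
  rw [hlaw]
  exact map_signedStats_comp_swap hc0 hc
    (fun p hp => (hαsign p.1 hp p.2).map_singleton_one (hαmeas _ _)) hν hF i

lemma spsNormSq_eq_dotProduct {d : ℕ} (v : Fin d → ℝ) : spsNormSq v = v ⬝ᵥ v := by
  simp [spsNormSq, dotProduct, sq]

lemma sum_vecMulVec_mulVec {ι n R : Type*} [Fintype ι] [Fintype n] [CommSemiring R]
    (φ : ι → n → R) (x : n → R) :
    (∑ t, vecMulVec (φ t) (φ t)) *ᵥ x = ∑ t, (φ t ⬝ᵥ x) • φ t := by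
  simp [sum_mulVec, vecMulVec_mulVec]

lemma spsNormSq_inv_mulVec {d : ℕ} {R Rhalf : Matrix (Fin d) (Fin d) ℝ}
    (hRhalf : Rhalf * Rhalfᵀ = R) (w : Fin d → ℝ) :
    spsNormSq (Rhalf⁻¹ *ᵥ w) = (R⁻¹ *ᵥ w) ⬝ᵥ w := by
  rw [spsNormSq_eq_dotProduct, dotProduct_mulVec, ← mulVec_transpose, mulVec_mulVec,
    transpose_nonsing_inv, ← Matrix.mul_inv_rev, hRhalf]

lemma lsq_error_eq {d n : ℕ} (hn : n ≠ 0) (φ : Fin n → Fin d → ℝ)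
    {Rn : Matrix (Fin d) (Fin d) ℝ}
    (hRn : Rn = (n : ℝ)⁻¹ • ∑ t, vecMulVec (φ t) (φ t)) (hdet : IsUnit Rn.det)
    (θ : Fin d → ℝ) (x : Fin n → ℝ) :
    θ - (∑ t, vecMulVec (φ t) (φ t))⁻¹ *ᵥ ∑ t, (φ t ⬝ᵥ θ + x t) • φ t
      = -(Rn⁻¹ *ᵥ ((n : ℝ)⁻¹ • ∑ t, x t • φ t)) := by
  have hn' : (n : ℝ) ≠ 0 := Nat.cast_ne_zero.2 hn
  have hM : ∑ t, vecMulVec (φ t) (φ t) = (n : ℝ) • Rn := by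
    rw [hRn, smul_smul, mul_inv_cancel₀ hn', one_smul]
  have hsplit : ∑ t, (φ t ⬝ᵥ θ + x t) • φ t = (n : ℝ) • (Rn *ᵥ θ) + ∑ t, x t • φ t := by
    rw [← smul_mulVec, ← hM, sum_vecMulVec_mulVec, ← Finset.sum_add_distrib]
    simp only [add_smul]
  have hMinv : ((n : ℝ) • Rn)⁻¹ = (n : ℝ)⁻¹ • Rn⁻¹ := inv_eq_left_inv <| by
    rw [Matrix.smul_mul, Matrix.mul_smul, smul_smul, inv_mul_cancel₀ hn', one_smul,
      nonsing_inv_mul _ hdet]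
  rw [hM, hsplit, hMinv, smul_mulVec, mulVec_add, mulVec_smul, mulVec_mulVec,
    nonsing_inv_mul _ hdet, one_mulVec, smul_add, smul_smul, inv_mul_cancel₀ hn', one_smul,
    mulVec_smul]
  abel

lemma dotProduct_mulVec_lsq_error {d n : ℕ} (hn : n ≠ 0) (φ : Fin n → Fin d → ℝ)
    {Rn Rhalf : Matrix (Fin d) (Fin d) ℝ}
    (hRn : Rn = (n : ℝ)⁻¹ • ∑ t, vecMulVec (φ t) (φ t)) (hdet : IsUnit Rn.det)
    (hRhalf : Rhalf * Rhalfᵀ = Rn) (θ θhat : Fin d → ℝ) (x : Fin n → ℝ)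
    (hθhat : θhat = (∑ t, vecMulVec (φ t) (φ t))⁻¹ *ᵥ ∑ t, (φ t ⬝ᵥ θ + x t) • φ t) :
    (θ - θhat) ⬝ᵥ (Rn *ᵥ (θ - θhat)) = spsNormSq (Rhalf⁻¹ *ᵥ ((n : ℝ)⁻¹ • ∑ t, x t • φ t)) := by
  rw [hθhat, lsq_error_eq hn φ hRn hdet, spsNormSq_inv_mulVec hRhalf, mulVec_neg, neg_dotProduct,
    dotProduct_neg, neg_neg, mulVec_mulVec, mul_nonsing_inv _ hdet, one_mulVec]

section Ellipsoid

variable {d n m : ℕ} [NeZero m] (φ : Fin n → Fin d → ℝ) (Rhalf : Matrix (Fin d) (Fin d) ℝ)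
  (Y : Fin n → ℝ) (a : Fin m → Fin n → ℝ)

lemma le_gammaStar {i : Fin m} {θ : Fin d → ℝ}
    (hθ : spsNormSq (spsS φ Rhalf Y a 0 θ) ≤ spsNormSq (spsS φ Rhalf Y a i θ)) :
    ((spsNormSq (spsS φ Rhalf Y a i θ) : ℝ) : EReal) ≤ gammaStar φ Rhalf Y a i :=
  le_sSup ⟨θ, hθ, rfl⟩

open Finset in
lemma le_qthLargestE_gammaStar {q : ℕ} (hq : 0 < q) {θ : Fin d → ℝ}
    (hθ : (fun j => spsNormSq (spsS φ Rhalf Y a j θ)) ∉ rankEvent (m - q) 0) :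
    ((spsNormSq (spsS φ Rhalf Y a 0 θ) : ℝ) : EReal) ≤
      qthLargestE ((univ.filter (fun i : Fin m => i ≠ 0)).val.map
        (fun i => gammaStar φ Rhalf Y a i)) q := by
  refine le_qthLargestE hq ?_
  calc q ≤ #{j | j ≠ 0 ∧ spsNormSq (spsS φ Rhalf Y a 0 θ) ≤ spsNormSq (spsS φ Rhalf Y a j θ)} :=
        le_card_filter_ne_of_notMem_rankEvent (by rwa [Fintype.card_fin])
    _ ≤ #{j ∈ univ.filter (· ≠ 0) |
          ((spsNormSq (spsS φ Rhalf Y a 0 θ) : ℝ) : EReal) ≤ gammaStar φ Rhalf Y a j} :=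
        card_le_card fun j hj => by
          simp only [mem_filter, mem_univ, true_and] at hj ⊢
          exact ⟨hj.1, (EReal.coe_le_coe_iff.2 hj.2).trans (le_gammaStar φ Rhalf Y a hj.2)⟩
    _ = _ := by rw [Multiset.filter_map, Multiset.card_map]; rfl

end Ellipsoid

lemma ofReal_one_sub_div_le {x : ℝ≥0∞} {q m : ℕ} (hm : 0 < m) (h : m * x ≤ q) :
    ENNReal.ofReal (1 - q / m) ≤ 1 - x := by
  have hm' : (m : ℝ≥0∞) ≠ 0 := Nat.cast_ne_zero.2 hm.ne'
  rw [ENNReal.ofReal_sub _ (by positivity), ENNReal.ofReal_one,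
    ENNReal.ofReal_div_of_pos (Nat.cast_pos.2 hm), ENNReal.ofReal_natCast, ENNReal.ofReal_natCast]
  exact tsub_le_tsub_left ((ENNReal.le_div_iff_mul_le (Or.inl hm')
    (Or.inl (ENNReal.natCast_ne_top m))).2 (mul_comm x m ▸ h)) 1

theorem sps_outer_approximation_confidence_general
    {Ω : Type*} [MeasurableSpace Ω] (μ : Measure Ω) [IsProbabilityMeasure μ]
    (d n m q : ℕ) [NeZero m] (hn : 0 < n) (hq : 0 < q) (hqm : q < m)
    (φ : Fin n → Fin d → ℝ)
    (Rn : Matrix (Fin d) (Fin d) ℝ)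
    (hRn : Rn = (n : ℝ)⁻¹ • ∑ t, vecMulVec (φ t) (φ t))
    (hRnPD : Rn.PosDef)
    (Rhalf : Matrix (Fin d) (Fin d) ℝ)
    (hRhalf : Rhalf * Rhalfᵀ = Rn)
    (θstar : Fin d → ℝ)
    (N : Fin n → Ω → ℝ)
    (hNmeas : ∀ t, Measurable (N t))
    (hNindep : iIndepFun N μ)
    (hNsymm : ∀ t, μ.map (N t) = μ.map (fun ω => -(N t ω)))
    (α : Fin m → Fin n → Ω → ℝ)
    (hα0 : ∀ t ω, α 0 t ω = 1)
    (hαmeas : ∀ i t, Measurable (α i t))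
    (hαindep : iIndepFun
      (fun p : Fin m × Fin n => α p.1 p.2) μ)
    (hαsign : ∀ i : Fin m, i ≠ 0 → ∀ t, IsRandomSign μ (α i t))
    (π : Ω → Equiv.Perm (Fin m))
    (hgroups : iIndep
      ![MeasurableSpace.comap (fun ω (t : Fin n) => N t ω) inferInstance,
        MeasurableSpace.comap (fun ω (p : Fin m × Fin n) => α p.1 p.2 ω) inferInstance,
        MeasurableSpace.comap π inferInstance] μ)
    -- the (random) least-squares estimate
    (θhat : Ω → Fin d → ℝ)
    (hθhat : ∀ ω, θhat ω = (∑ t, vecMulVec (φ t) (φ t))⁻¹ *ᵥ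
      ∑ t, (φ t ⬝ᵥ θstar + N t ω) • φ t) :
    ENNReal.ofReal (1 - (q : ℝ) / m) ≤
      μ {ω | (((θstar - θhat ω) ⬝ᵥ (Rn *ᵥ (θstar - θhat ω)) : ℝ) : EReal) ≤
        qthLargestE ((Finset.univ.filter (fun i : Fin m => i ≠ 0)).val.map
          (fun i => gammaStar φ Rhalf (fun t => φ t ⬝ᵥ θstar + N t ω)
            (fun i t => α i t ω) i)) q} := by
  set F : (Fin n → ℝ) → ℝ := fun v => spsNormSq (Rhalf⁻¹ *ᵥ ((n : ℝ)⁻¹ • ∑ t, v t • φ t))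
  set Z : Ω → Fin m → ℝ := fun ω j => spsNormSq (spsS φ Rhalf
    (fun t => φ t ⬝ᵥ θstar + N t ω) (fun i t => α i t ω) j θstar)
  have hF : Measurable F := by
    simp only [F, spsNormSq]
    fun_prop
  have hZ : Z = fun ω => signedStats F (fun p => α p.1 p.2 ω, fun t => N t ω) := by
    funext ω j
    simp [Z, F, signedStats, spsS]
  have hZmeas : Measurable Z := hZ ▸ (measurable_signedStats hF).comp
    ((measurable_pi_lambda _ fun p : Fin m × Fin n => hαmeas p.1 p.2).prodMk
      (measurable_pi_lambda _ hNmeas))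
  have hbad : (m : ℝ≥0∞) * μ (Z ⁻¹' rankEvent (m - q) 0) ≤ q := by
    have := card_mul_measure_rankEvent_le (μ.map Z) (m - q) 0 fun i => hZ ▸
      map_signedStats_comp_swap_of_iIndepFun hαmeas hNmeas hα0 hαsign hNsymm hαindep hNindep
        ((IndepFun_iff_Indep _ _ _).2 (hgroups.indep (i := 1) (j := 0) (by decide))) hF i
    rwa [Measure.map_apply hZmeas (measurableSet_rankEvent _ _),
      Measure.map_apply hZmeas MeasurableSet.univ, Set.preimage_univ, measure_univ, mul_one,
      Fintype.card_fin, Nat.sub_sub_self hqm.le] at this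
  calc ENNReal.ofReal (1 - (q : ℝ) / m) ≤ 1 - μ (Z ⁻¹' rankEvent (m - q) 0) :=
        ofReal_one_sub_div_le (NeZero.pos m) hbad
    _ = μ (Z ⁻¹' rankEvent (m - q) 0)ᶜ :=
        (prob_compl_eq_one_sub (hZmeas (measurableSet_rankEvent _ _))).symm
    _ ≤ _ := measure_mono fun ω hω => by
        rw [Set.mem_ofPred_eq, dotProduct_mulVec_lsq_error hn.ne' φ hRn
          hRnPD.det_pos.ne'.isUnit hRhalf θstar (θhat ω) _ (hθhat ω)]
        simpa [spsS, hα0] using le_qthLargestE_gammaStar φ Rhalf _ _ hq hω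

/-- Under A1 and A2, the ellipsoidal outer approximation
`Θ̂̂ₙ = {θ : (θ−θ̂ₙ)ᵀ Rₙ (θ−θ̂ₙ) ≤ r}`, with `r` the `q`-th largest of the `γ_i*`,
contains the true parameter with probability at least `p = 1 − q/m`. -/
theorem sps_outer_approximation_confidence
    {Ω : Type*} [MeasurableSpace Ω] (μ : Measure Ω) [IsProbabilityMeasure μ]
    (d n m q : ℕ) [NeZero m] (hn : 0 < n) (hq : 0 < q) (hqm : q < m)
    (φ : Fin n → Fin d → ℝ)
    (Rn : Matrix (Fin d) (Fin d) ℝ)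
    (hRn : Rn = (n : ℝ)⁻¹ • ∑ t, vecMulVec (φ t) (φ t))
    (hRnPD : Rn.PosDef)
    (Rhalf : Matrix (Fin d) (Fin d) ℝ)
    (hRhalfPD : Rhalf.PosDef)
    (hRhalf : Rhalf * Rhalfᵀ = Rn)
    (θstar : Fin d → ℝ)
    (N : Fin n → Ω → ℝ)
    (hNmeas : ∀ t, Measurable (N t))
    (hNindep : iIndepFun N μ)
    (hNsymm : ∀ t, μ.map (N t) = μ.map (fun ω => -(N t ω)))
    (α : Fin m → Fin n → Ω → ℝ)
    (hα0 : ∀ t ω, α 0 t ω = 1)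
    (hαmeas : ∀ i t, Measurable (α i t))
    (hαindep : iIndepFun
      (fun p : Fin m × Fin n => α p.1 p.2) μ)
    (hαsign : ∀ i : Fin m, i ≠ 0 → ∀ t, IsRandomSign μ (α i t))
    (π : Ω → Equiv.Perm (Fin m))
    (hπ : ∀ σ : Equiv.Perm (Fin m), μ {ω | π ω = σ} = (m.factorial : ℝ≥0∞)⁻¹)
    (hgroups : iIndep
      ![MeasurableSpace.comap (fun ω (t : Fin n) => N t ω) inferInstance,
        MeasurableSpace.comap (fun ω (p : Fin m × Fin n) => α p.1 p.2 ω) inferInstance,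
        MeasurableSpace.comap π inferInstance] μ)
    -- the (random) least-squares estimate
    (θhat : Ω → Fin d → ℝ)
    (hθhat : ∀ ω, θhat ω = (∑ t, vecMulVec (φ t) (φ t))⁻¹ *ᵥ
      ∑ t, (φ t ⬝ᵥ θstar + N t ω) • φ t) :
    ENNReal.ofReal (1 - (q : ℝ) / m) ≤
      μ {ω | (((θstar - θhat ω) ⬝ᵥ (Rn *ᵥ (θstar - θhat ω)) : ℝ) : EReal) ≤
        qthLargestE ((Finset.univ.filter (fun i : Fin m => i ≠ 0)).val.map
          (fun i => gammaStar φ Rhalf (fun t => φ t ⬝ᵥ θstar + N t ω)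
            (fun i t => α i t ω) i)) q} :=
  sps_outer_approximation_confidence_general μ d n m q hn hq hqm φ Rn hRn hRnPD Rhalf hRhalf θstar N
    hNmeas hNindep hNsymm α hα0 hαmeas hαindep hαsign π hgroups θhat hθhat

end
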